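/- Let μ, α, β, a be real numbers and n ≥ 2 a positive integer. Define the quadratic form g(x₁,…,xₙ) = μx₁² + α·∑_{i=2}^{n} xᵢ² + 2a·∑_{i=2}^{n} x₁xᵢ + 2β·∑_{2≤i<j≤n} xᵢxⱼ. If α ≥ β; μ + α + (n−2)β ≥ 0; μα + (n−2)μβ − (n−1)a² ≥ 0; μ + (n−1)α > 0; and (α − β)·[μα + (n−2)μβ − (n−1)a²] = 0, then g is positive semidefinite, i.e., g(x₁,…,xₙ) ≥ 0 for all real x₁,…,xₙ. -/

import Mathlib

/-
Writing `s = ∑_{i≥2} xᵢ` and `q = ∑_{i≥2} xᵢ²`, the form is `μx₁² + 2a·x₁s + βs² + (α − β)q`.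
Cauchy–Schwarz gives `s² ≤ (n − 1)q`, and `α ≥ β`, so `(n − 1)·g` dominates the binary form
`(n − 1)μ·x₁² + 2(n − 1)a·x₁s + (α + (n − 2)β)s²`, whose discriminant condition is exactly
`μα + (n − 2)μβ − (n − 1)a² ≥ 0`. Its diagonal coefficients are nonnegative since `μ` and
`α + (n − 2)β` have nonnegative sum and product.
-/

open Finset

/-- The quadratic form
`g(x₁,…,xₙ) = μx₁² + α·∑_{i=2}^{n} xᵢ² + 2a·∑_{i=2}^{n} x₁xᵢ + 2β·∑_{2≤i<j≤n} xᵢxⱼ`. -/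
def quadFormG (n : ℕ) (μ α β a : ℝ) (x : ℕ → ℝ) : ℝ :=
    μ * x 1 ^ 2 + α * ∑ i ∈ Icc 2 n, x i ^ 2
    + 2 * a * ∑ i ∈ Icc 2 n, x 1 * x i
    + 2 * β * ∑ i ∈ Icc 2 n, ∑ j ∈ Icc (i + 1) n, x i * x j

theorem two_mul_sum_Icc_mul_eq_sq_sub (m n : ℕ) (x : ℕ → ℝ) :
    2 * ∑ i ∈ Icc m n, ∑ j ∈ Icc (i + 1) n, x i * x j
      = (∑ i ∈ Icc m n, x i) ^ 2 - ∑ i ∈ Icc m n, x i ^ 2 := by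
  induction hk : n + 1 - m generalizing m with
  | zero => simp [Icc_eq_empty_of_lt (show n < m by omega)]
  | succ k ih =>
    have hmn : m ≤ n := by omega
    have hnot : m ∉ Icc (m + 1) n := by simp
    rw [← insert_Icc_add_one_left_eq_Icc hmn, sum_insert hnot, sum_insert hnot, sum_insert hnot,
      ← mul_sum, mul_add, ih (m + 1) (by omega)]
    ring

theorem binary_quadratic_nonneg {p b c : ℝ} (hp : 0 ≤ p) (hc : 0 ≤ c) (hdisc : b ^ 2 ≤ p * c)
    (t s : ℝ) : 0 ≤ p * t ^ 2 + 2 * b * t * s + c * s ^ 2 := by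
  rcases hp.eq_or_lt with rfl | hp
  · have hb : b = 0 := by nlinarith [sq_nonneg b]
    subst hb
    simpa using mul_nonneg hc (sq_nonneg s)
  · have h : p * (p * t ^ 2 + 2 * b * t * s + c * s ^ 2)
        = (p * t + b * s) ^ 2 + (p * c - b ^ 2) * s ^ 2 := by ring
    have : 0 ≤ p * (p * t ^ 2 + 2 * b * t * s + c * s ^ 2) := by
      rw [h]; exact add_nonneg (sq_nonneg _) (mul_nonneg (by linarith) (sq_nonneg s))
    exact nonneg_of_mul_nonneg_right this hp

theorem quadFormG_eq (n : ℕ) (μ α β a : ℝ) (x : ℕ → ℝ) :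
    quadFormG n μ α β a x
      = μ * x 1 ^ 2 + 2 * a * x 1 * ∑ i ∈ Icc 2 n, x i + β * (∑ i ∈ Icc 2 n, x i) ^ 2
        + (α - β) * ∑ i ∈ Icc 2 n, x i ^ 2 := by
  rw [quadFormG, ← mul_sum]
  linear_combination β * two_mul_sum_Icc_mul_eq_sq_sub 2 n x

theorem card_Icc_two_cast {n : ℕ} (hn : 1 ≤ n) : (#(Icc 2 n) : ℝ) = (n : ℝ) - 1 := by
  rw [Nat.card_Icc, show n + 1 - 2 = n - 1 by omega, Nat.cast_sub hn, Nat.cast_one]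

theorem quadFormG_nonneg_general (n : ℕ) (μ α β a : ℝ)
    (hn : 2 ≤ n)
    (hA1 : α ≥ β)
    (hA2 : μ + α + ((n : ℝ) - 2) * β ≥ 0)
    (hA3 : μ * α + ((n : ℝ) - 2) * μ * β - ((n : ℝ) - 1) * a ^ 2 ≥ 0) :
    ∀ x : ℕ → ℝ, quadFormG n μ α β a x ≥ 0 := by
  intro x
  set m : ℝ := (n : ℝ) - 1
  set s := ∑ i ∈ Icc 2 n, x i
  set q := ∑ i ∈ Icc 2 n, x i ^ 2
  have hm : 0 < m := by
    have : (2 : ℝ) ≤ n := by exact_mod_cast hn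
    linarith
  obtain ⟨hμ, hC⟩ : 0 ≤ μ ∧ 0 ≤ α + ((n : ℝ) - 2) * β := by
    have hprod : 0 ≤ μ * (α + ((n : ℝ) - 2) * β) := by nlinarith [sq_nonneg a]
    rcases mul_nonneg_iff.mp hprod with h | ⟨h₁, h₂⟩
    · exact h
    · constructor <;> linarith
  have hCS : s ^ 2 ≤ m * q := by
    rw [show m = #(Icc 2 n) from (card_Icc_two_cast (by omega)).symm]
    exact sq_sum_le_card_mul_sum_sq
  have hbinary := binary_quadratic_nonneg (mul_nonneg hm.le hμ) hC
    (show (m * a) ^ 2 ≤ m * μ * (α + ((n : ℝ) - 2) * β) by nlinarith) (x 1) s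
  have hscaled : 0 ≤ m * quadFormG n μ α β a x := by
    rw [quadFormG_eq]
    nlinarith [mul_le_mul_of_nonneg_left hCS (sub_nonneg.mpr hA1)]
  exact nonneg_of_mul_nonneg_right hscaled hm

theorem quadFormG_nonneg (n : ℕ) (μ α β a : ℝ)
    (hn : 2 ≤ n)
    (hA1 : α ≥ β)
    (hA2 : μ + α + ((n : ℝ) - 2) * β ≥ 0)
    (hA3 : μ * α + ((n : ℝ) - 2) * μ * β - ((n : ℝ) - 1) * a ^ 2 ≥ 0)
    (hA4 : μ + ((n : ℝ) - 1) * α > 0)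
    (hA5 : (α - β) * (μ * α + ((n : ℝ) - 2) * μ * β - ((n : ℝ) - 1) * a ^ 2) = 0) :
    ∀ x : ℕ → ℝ, quadFormG n μ α β a x ≥ 0 :=
  quadFormG_nonneg_general n μ α β a hn hA1 hA2 hA3
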